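/- arXiv:2111.00405 — 3 statements merged into one kernel-verified Lean document; each statement's English description precedes it below -/
import Mathlib

section
/- Let y₁, …, y_t be vectors in ℂ^N with all entries in {0,1}, all having the same Hamming weight (number of 1-entries). Then every vector y in their complex affine hull (i.e., y = Σ wᵢ yᵢ with Σ wᵢ = 1, wᵢ ∈ ℂ) satisfies ‖y‖₂ ≥ ‖y₁‖₂ / √t. -/
/-!
Let `k` be the common weight. Every `yᵢ` has coordinate sum `k`, hence so does every affine
combination `v`, and `v` vanishes outside the union `S` of the supports, where `#S ≤ t k`.
Cauchy–Schwarz on `S` gives `k² ≤ #S ‖v‖² ≤ t k ‖v‖²`, i.e. `‖y₀‖² = k ≤ t ‖v‖²`.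
-/

open Finset

section ZeroOne

variable {𝕜 ι : Type*} [Fintype ι]

theorem sum_comp_of_zero_one [Zero 𝕜] [One 𝕜] [NeZero (1 : 𝕜)] [DecidableEq 𝕜] {M : Type*}
    [AddCommMonoid M] {x : ι → 𝕜} (hx : ∀ j, x j = 0 ∨ x j = 1) (f : 𝕜 → M) (hf : f 0 = 0) :
    ∑ j, f (x j) = #{j | x j = 1} • f 1 := by
  rw [← sum_const, sum_filter]
  refine sum_congr rfl fun j _ => ?_
  rcases hx j with h | h <;> simp [h, hf]

variable [RCLike 𝕜] [DecidableEq 𝕜]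

theorem sum_eq_card_of_zero_one {x : ι → 𝕜} (hx : ∀ j, x j = 0 ∨ x j = 1) :
    ∑ j, x j = #{j | x j = 1} := by
  simpa using sum_comp_of_zero_one hx id rfl

theorem EuclideanSpace.norm_sq_eq_card_of_zero_one {x : EuclideanSpace 𝕜 ι}
    (hx : ∀ j, x j = 0 ∨ x j = 1) : ‖x‖ ^ 2 = #{j | x j = 1} := by
  rw [EuclideanSpace.norm_sq_eq, sum_comp_of_zero_one hx (‖·‖ ^ 2) (by simp)]
  simp

end ZeroOne

section Euclidean

variable {𝕜 ι : Type*} [RCLike 𝕜] [Fintype ι]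

theorem EuclideanSpace.norm_sum_coord_sq_le {v : EuclideanSpace 𝕜 ι} {S : Finset ι}
    (hv : ∀ j ∉ S, v j = 0) : ‖∑ j, v j‖ ^ 2 ≤ #S * ‖v‖ ^ 2 := by
  rw [← sum_subset (subset_univ S) fun j _ hj => hv j hj]
  calc ‖∑ j ∈ S, v j‖ ^ 2 ≤ (∑ j ∈ S, ‖v j‖) ^ 2 := by gcongr; exact norm_sum_le _ _
    _ ≤ #S * ∑ j ∈ S, ‖v j‖ ^ 2 := sq_sum_le_card_mul_sum_sq
    _ ≤ #S * ‖v‖ ^ 2 := by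
      rw [EuclideanSpace.norm_sq_eq]
      gcongr ?_ * ?_
      exact sum_le_sum_of_subset_of_nonneg (subset_univ S) fun j _ _ => by positivity

theorem EuclideanSpace.sum_coord_affineCombination {κ : Type*} [Fintype κ]
    {y : κ → EuclideanSpace 𝕜 ι} {c : 𝕜} (hy : ∀ i, ∑ j, y i j = c) {w : κ → 𝕜} (hw : ∑ i, w i = 1) :
    ∑ j, (∑ i, w i • y i) j = c := by
  simp only [WithLp.ofLp_sum, WithLp.ofLp_smul, Finset.sum_apply, Pi.smul_apply, smul_eq_mul]
  rw [sum_comm]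
  simp [← mul_sum, hy, ← sum_mul, hw]

end Euclidean

open scoped Classical in
/-- If `y 0, …, y (t-1)` are 0/1 vectors in `ℂ^N` all having the same Hamming weight,
then every vector in their complex affine hull has norm at least `‖y 0‖ / √t`. -/
theorem stmt_0 (N t : ℕ) (ht : 0 < t) (y : Fin t → EuclideanSpace ℂ (Fin N))
    (h01 : ∀ i j, y i j = 0 ∨ y i j = 1)
    (hweight : ∀ i i' : Fin t,
      (Finset.univ.filter (fun j => y i j = 1)).card
        = (Finset.univ.filter (fun j => y i' j = 1)).card)
    (w : Fin t → ℂ) (hw : ∑ i, w i = 1) :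
    ‖y ⟨0, ht⟩‖ / Real.sqrt t ≤ ‖∑ i, w i • y i‖ := by
  set k := #{j | y ⟨0, ht⟩ j = 1}
  set v := ∑ i, w i • y i
  set S := univ.biUnion fun i => {j | y i j = 1}
  have hvS : ∀ j ∉ S, v j = 0 := by
    intro j hj
    simp only [S, mem_biUnion, mem_filter, mem_univ, true_and, not_exists] at hj
    simp [v, Finset.sum_apply, fun i => (h01 i j).resolve_right (hj i)]
  have hS : #S ≤ t * k := by
    simpa using card_biUnion_le_card_mul univ _ k fun i _ => (hweight i _).le
  have hv : ∑ j, v j = k :=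
    EuclideanSpace.sum_coord_affineCombination
      (fun i => by rw [sum_eq_card_of_zero_one (h01 i), hweight i]) hw
  have hcs : (k : ℝ) ^ 2 ≤ k * (t * ‖v‖ ^ 2) := by
    calc (k : ℝ) ^ 2 = ‖∑ j, v j‖ ^ 2 := by simp [hv]
      _ ≤ #S * ‖v‖ ^ 2 := EuclideanSpace.norm_sum_coord_sq_le hvS
      _ ≤ k * (t * ‖v‖ ^ 2) := by
        rw [← mul_assoc, mul_comm (k : ℝ)]; gcongr; exact_mod_cast hS
  have hk : (k : ℝ) ≤ t * ‖v‖ ^ 2 := by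
    rcases (Nat.zero_le k).eq_or_lt with hk0 | hk0
    · rw [← hk0, Nat.cast_zero]; positivity
    · exact le_of_mul_le_mul_left (by simpa [sq] using hcs) (by exact_mod_cast hk0)
  rw [div_le_iff₀ (by positivity), ← pow_le_pow_iff_left₀ (norm_nonneg _) (by positivity)
    two_ne_zero, EuclideanSpace.norm_sq_eq_card_of_zero_one (h01 _), mul_pow,
    Real.sq_sqrt (by positivity), mul_comm]
  exact hk
end

section
/- Let V ∈ ℂ^{n×k} have Gram matrix G = V*V and affine hull A = {Vx : Σxᵢ = 1}. The squared length γ* of the shortest vector in A satisfies γ* = max{γ ∈ ℝ : G − γ·𝟏𝟏ᵀ ⪰ 0}, where 𝟏𝟏ᵀ is the all-ones rank-one matrix and ⪰ 0 denotes positive semidefiniteness. -/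
/-!
At `z`, the quadratic form of `Vᴴ V - γ • 𝟏𝟏ᵀ` has real part `‖V z‖² - γ |∑ zᵢ|²`. Rescaling `z`
to `z / ∑ zᵢ` (when `∑ zᵢ = 0` the form is trivially nonnegative) shows that the matrix is
positive semidefinite exactly when `γ` is a lower bound of `‖V x‖²` over the affine hull. Hence
the set of admissible `γ` is the set of lower bounds of `{‖V x‖² : ∑ xᵢ = 1}`, whose greatest
element is its infimum `γ*`.
-/

open Matrix
open scoped ComplexOrder

section
variable {𝕜 ι m : Type*} [RCLike 𝕜] [Fintype ι] [Fintype m]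

lemma forall_mul_norm_sum_sq_le_iff {q : (ι → 𝕜) → ℝ} (hq_nonneg : ∀ z, 0 ≤ q z)
    (hq_smul : ∀ (c : 𝕜) z, q (c • z) = ‖c‖ ^ 2 * q z) (γ : ℝ) :
    (∀ z, γ * ‖∑ i, z i‖ ^ 2 ≤ q z) ↔ ∀ x, ∑ i, x i = 1 → γ ≤ q x := by
  refine ⟨fun h x hx => by simpa [hx] using h x, fun h z => ?_⟩
  set s := ∑ i, z i
  rcases eq_or_ne s 0 with hs | hs
  · simpa [hs] using hq_nonneg z
  have hx : ∑ i, (s⁻¹ • z) i = 1 := by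
    simp only [Pi.smul_apply, smul_eq_mul, ← Finset.mul_sum]
    exact inv_mul_cancel₀ hs
  calc γ * ‖s‖ ^ 2 ≤ ‖s‖ ^ 2 * q (s⁻¹ • z) := by
        rw [mul_comm]; exact mul_le_mul_of_nonneg_left (h _ hx) (by positivity)
    _ = q z := by rw [← hq_smul, smul_inv_smul₀ hs]

lemma re_star_dotProduct_self_nonneg (w : m → 𝕜) : 0 ≤ RCLike.re (star w ⬝ᵥ w) :=
  (RCLike.nonneg_iff.mp (dotProduct_star_self_nonneg w)).1

lemma re_star_dotProduct_self_smul (c : 𝕜) (w : m → 𝕜) :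
    RCLike.re (star (c • w) ⬝ᵥ (c • w)) = ‖c‖ ^ 2 * RCLike.re (star w ⬝ᵥ w) := by
  rw [star_smul, smul_dotProduct, dotProduct_smul, smul_smul, smul_eq_mul, RCLike.star_def,
    RCLike.conj_mul, ← RCLike.ofReal_pow, RCLike.re_ofReal_mul]

lemma ones_mulVec (z : ι → 𝕜) :
    (of fun _ _ : ι => (1 : 𝕜)) *ᵥ z = fun _ => ∑ i, z i := by
  ext; simp [mulVec, dotProduct]

lemma star_dotProduct_ones_mulVec (z : ι → 𝕜) :
    star z ⬝ᵥ (of fun _ _ : ι => (1 : 𝕜)) *ᵥ z = (‖∑ i, z i‖ : 𝕜) ^ 2 := by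
  rw [ones_mulVec, ← RCLike.conj_mul, ← RCLike.star_def, star_sum]
  simp [dotProduct, Finset.sum_mul]

lemma re_star_dotProduct_gram_sub_smul_ones_mulVec (V : Matrix m ι 𝕜) (γ : ℝ) (z : ι → 𝕜) :
    RCLike.re (star z ⬝ᵥ (Vᴴ * V - γ • of fun _ _ : ι => (1 : 𝕜)) *ᵥ z)
      = RCLike.re (star (V *ᵥ z) ⬝ᵥ V *ᵥ z) - γ * ‖∑ i, z i‖ ^ 2 := by
  rw [sub_mulVec, dotProduct_sub, smul_mulVec, dotProduct_smul, star_dotProduct_ones_mulVec,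
    ← mulVec_mulVec, dotProduct_mulVec, vecMul_conjTranspose, star_star, map_sub,
    RCLike.real_smul_eq_coe_mul, ← RCLike.ofReal_pow, ← RCLike.ofReal_mul, RCLike.ofReal_re]

omit [Fintype ι] in
lemma isHermitian_gram_sub_smul_ones (V : Matrix m ι 𝕜) (γ : ℝ) :
    (Vᴴ * V - γ • of fun _ _ : ι => (1 : 𝕜)).IsHermitian := by
  refine (isHermitian_conjTranspose_mul_self V).sub ?_
  ext i j
  simp [conjTranspose_apply]

lemma posSemidef_gram_sub_smul_ones_iff (V : Matrix m ι 𝕜) (γ : ℝ) :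
    (Vᴴ * V - γ • of fun _ _ : ι => (1 : 𝕜)).PosSemidef ↔
      ∀ x, ∑ i, x i = 1 → γ ≤ RCLike.re (star (V *ᵥ x) ⬝ᵥ V *ᵥ x) := by
  have hM := isHermitian_gram_sub_smul_ones V γ
  rw [← forall_mul_norm_sum_sq_le_iff (fun z => re_star_dotProduct_self_nonneg (V *ᵥ z))
    (fun c z => by rw [mulVec_smul, re_star_dotProduct_self_smul]),
    posSemidef_iff_dotProduct_mulVec, and_iff_right hM]
  refine forall_congr' fun z => ?_
  rw [RCLike.nonneg_iff, and_iff_left (hM.im_star_dotProduct_mulVec_self z),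
    re_star_dotProduct_gram_sub_smul_ones_mulVec, sub_nonneg]

end

open Matrix in
open scoped ComplexOrder in
/-- Let `V ∈ ℂ^{n×k}` (with `k ≥ 1`) have Gram matrix `G = Vᴴ V` and affine hull
`A = {Vx : ∑ xᵢ = 1}`.  The squared length `γ*` of the shortest vector in `A` equals
`max {γ ∈ ℝ : G - γ·𝟏𝟏ᵀ ⪰ 0}` (the maximum is attained). -/
theorem stmt_9 (n k : ℕ) (hk : 0 < k) (V : Matrix (Fin n) (Fin k) ℂ)
    (G : Matrix (Fin k) (Fin k) ℂ) (hG : G = Vᴴ * V)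
    (γstar : ℝ)
    (hγ : γstar = sInf {r : ℝ | ∃ x : Fin k → ℂ,
      (∑ i, x i) = 1 ∧ r = (star (V.mulVec x) ⬝ᵥ V.mulVec x).re}) :
    IsGreatest {γ : ℝ | (G - γ • Matrix.of fun _ _ : Fin k => (1 : ℂ)).PosSemidef} γstar := by
  subst hG hγ
  set S := {r : ℝ | ∃ x : Fin k → ℂ, (∑ i, x i) = 1 ∧ r = (star (V *ᵥ x) ⬝ᵥ V *ᵥ x).re}
  have hne : S.Nonempty := ⟨_, Pi.single ⟨0, hk⟩ 1, by simp, rfl⟩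
  have hbdd : BddBelow S :=
    ⟨0, by rintro _ ⟨x, -, rfl⟩; exact re_star_dotProduct_self_nonneg (V *ᵥ x)⟩
  have hpsd :
      {γ : ℝ | (Vᴴ * V - γ • of fun _ _ : Fin k => (1 : ℂ)).PosSemidef} = lowerBounds S := by
    ext γ
    rw [Set.mem_ofPred_eq, posSemidef_gram_sub_smul_ones_iff]
    simp only [lowerBounds, S, Set.mem_ofPred_eq, forall_exists_index, and_imp]
    exact ⟨fun h _ x hx hr => hr ▸ h x hx, fun h x hx => h x hx rfl⟩
  rw [hpsd]
  exact isGLB_csInf hne hbdd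
end

section
/- For all integers n ≥ 1 and 0 < h ≤ n/2, we have Σ_{j=0}^{h} C(n,j) ≤ 3·√h·C(n,h). -/
open Real Finset

private lemma sqrt_pi_le_stirlingSeq (n : ℕ) (hn : 1 ≤ n) :
    Real.sqrt Real.pi ≤ Stirling.stirlingSeq n := by
  obtain ⟨m, rfl⟩ : ∃ m, n = m + 1 := ⟨n - 1, by omega⟩
  have htend : Filter.Tendsto (Stirling.stirlingSeq ∘ Nat.succ) Filter.atTop
      (nhds (Real.sqrt Real.pi)) :=
    Stirling.tendsto_stirlingSeq_sqrt_pi.comp (Filter.tendsto_add_atTop_nat 1)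
  exact Stirling.stirlingSeq'_antitone.le_of_tendsto htend m

private lemma stirlingSeq_le (n : ℕ) (hn : 1 ≤ n) :
    Stirling.stirlingSeq n ≤ Real.exp 1 / Real.sqrt 2 := by
  obtain ⟨m, rfl⟩ : ∃ m, n = m + 1 := ⟨n - 1, by omega⟩
  have := Stirling.stirlingSeq'_antitone (Nat.zero_le m)
  simpa [Stirling.stirlingSeq_one] using this

private lemma fact_lb (n : ℕ) (hn : 1 ≤ n) :
    Real.sqrt Real.pi * (Real.sqrt (2 * n) * ((n : ℝ) / Real.exp 1) ^ n) ≤ (Nat.factorial n : ℝ) := by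
  have hn0 : (0 : ℝ) < n := by exact_mod_cast hn
  have hd : 0 < Real.sqrt (2 * n) * ((n : ℝ) / Real.exp 1) ^ n := by positivity
  have h := sqrt_pi_le_stirlingSeq n hn
  rw [Stirling.stirlingSeq, le_div_iff₀ hd] at h
  exact h

private lemma fact_ub (n : ℕ) (hn : 1 ≤ n) :
    (Nat.factorial n : ℝ) ≤ Real.exp 1 / Real.sqrt 2 * (Real.sqrt (2 * n) * ((n : ℝ) / Real.exp 1) ^ n) := by
  have hn0 : (0 : ℝ) < n := by exact_mod_cast hn
  have hd : 0 < Real.sqrt (2 * n) * ((n : ℝ) / Real.exp 1) ^ n := by positivity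
  have h := stirlingSeq_le n hn
  rw [Stirling.stirlingSeq, div_le_iff₀ hd] at h
  linarith [h]

private lemma exp_sq_le : Real.exp 1 ^ 2 ≤ 3 * (Real.sqrt 2 * Real.sqrt Real.pi) := by
  have h9 : Real.sqrt 9 = 3 := by
    rw [show (9 : ℝ) = 3 ^ 2 by norm_num, Real.sqrt_sq (by norm_num)]
  have : (3 : ℝ) * (Real.sqrt 2 * Real.sqrt Real.pi) = Real.sqrt (18 * Real.pi) := by
    rw [show (18 : ℝ) * Real.pi = 9 * (2 * Real.pi) by ring,
      Real.sqrt_mul (by norm_num), Real.sqrt_mul (by norm_num), h9]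
  rw [this, Real.le_sqrt (by positivity) (by positivity)]
  have he : Real.exp 1 < 2.7182818286 := Real.exp_one_lt_d9
  have hpi : (3.141592 : ℝ) < Real.pi := Real.pi_gt_d6
  have he0 : (0 : ℝ) < Real.exp 1 := Real.exp_pos 1
  have h1 : Real.exp 1 ^ 2 ≤ 7.3890560997 := by
    have := pow_lt_pow_left₀ he he0.le (by norm_num : 2 ≠ 0)
    calc Real.exp 1 ^ 2 ≤ (2.7182818286 : ℝ) ^ 2 := this.le
      _ ≤ 7.3890560997 := by norm_num
  have h2 : (Real.exp 1 ^ 2) ^ 2 ≤ 7.3890560997 ^ 2 :=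
    pow_le_pow_left₀ (sq_nonneg _) h1 2
  calc (Real.exp 1 ^ 2) ^ 2 ≤ (7.3890560997 : ℝ) ^ 2 := h2
    _ ≤ 18 * 3.141592 := by norm_num
    _ ≤ 18 * Real.pi := by linarith

/-- For `n ≥ 1` and `0 < h ≤ n/2`: `∑_{j=0}^{h} C(n,j) ≤ 3·√h·C(n,h)`. -/
theorem stmt_11 (n h : ℕ) (hn : 1 ≤ n) (hh : 0 < h) (hhn : 2 * h ≤ n) :
    (∑ j ∈ Finset.range (h + 1), (n.choose j : ℝ)) ≤ 3 * Real.sqrt h * n.choose h := by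
  set k := n - h with hkdef
  have hkn : h + k = n := by omega
  have hhk : h ≤ k := by omega
  have hk1 : 1 ≤ k := le_trans hh hhk
  have hH : (0 : ℝ) < h := by exact_mod_cast hh
  have hK : (0 : ℝ) < k := by exact_mod_cast hk1
  have hN : (0 : ℝ) < n := by exact_mod_cast hn
  have hNHK : (n : ℝ) = h + k := by exact_mod_cast hkn.symm
  set E : ℝ := ((n : ℝ) / h) ^ h * ((n : ℝ) / k) ^ k with hEdef
  -- entropy bound
  have hS : (∑ j ∈ Finset.range (h + 1), (n.choose j : ℝ)) ≤ E := by
    set x : ℝ := (h : ℝ) / k with hxdef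
    have hx0 : 0 < x := div_pos hH hK
    have hx1 : x ≤ 1 := (div_le_one hK).mpr (by exact_mod_cast hhk)
    have h1 : (∑ j ∈ Finset.range (h + 1), (n.choose j : ℝ)) * x ^ h
        ≤ ∑ j ∈ Finset.range (h + 1), (n.choose j : ℝ) * x ^ j := by
      rw [Finset.sum_mul]
      apply Finset.sum_le_sum
      intro j hj
      have hjh : j ≤ h := Nat.lt_succ_iff.mp (Finset.mem_range.mp hj)
      exact mul_le_mul_of_nonneg_left (pow_le_pow_of_le_one hx0.le hx1 hjh) (by positivity)
    have h2 : (∑ j ∈ Finset.range (h + 1), (n.choose j : ℝ) * x ^ j) ≤ (1 + x) ^ n := by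
      calc (∑ j ∈ Finset.range (h + 1), (n.choose j : ℝ) * x ^ j)
          ≤ ∑ j ∈ Finset.range (n + 1), (n.choose j : ℝ) * x ^ j :=
            Finset.sum_le_sum_of_subset_of_nonneg
              (Finset.range_subset_range.mpr (by omega)) (fun i _ _ => by positivity)
        _ = (1 + x) ^ n := by
            rw [add_comm 1 x, add_pow]
            exact Finset.sum_congr rfl (fun j _ => by rw [one_pow]; ring)
    have hEx : E * x ^ h = (1 + x) ^ n := by
      have h1x : 1 + x = (n : ℝ) / k := by
        rw [hxdef, hNHK]; field_simp; ring
      have e1 : ((n : ℝ) / h) ^ h * x ^ h = ((n : ℝ) / k) ^ h := by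
        rw [hxdef, ← mul_pow]
        congr 1
        field_simp
      calc E * x ^ h = (((n : ℝ) / h) ^ h * x ^ h) * ((n : ℝ) / k) ^ k := by
            rw [hEdef]; ring
        _ = ((n : ℝ) / k) ^ h * ((n : ℝ) / k) ^ k := by rw [e1]
        _ = ((n : ℝ) / k) ^ n := by rw [← pow_add, hkn]
        _ = (1 + x) ^ n := by rw [h1x]
    have := le_trans h1 h2
    rw [← hEx] at this
    exact le_of_mul_le_mul_right this (by positivity)
  -- Stirling part
  set a : ℝ := Real.sqrt (2 * n) * ((n : ℝ) / Real.exp 1) ^ n with hadef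
  set b : ℝ := Real.sqrt (2 * h) * ((h : ℝ) / Real.exp 1) ^ h with hbdef
  set c : ℝ := Real.sqrt (2 * k) * ((k : ℝ) / Real.exp 1) ^ k with hcdef
  have ha : Real.sqrt Real.pi * a ≤ (Nat.factorial n : ℝ) := fact_lb n hn
  have hb : (Nat.factorial h : ℝ) ≤ Real.exp 1 / Real.sqrt 2 * b := fact_ub h hh
  have hc : (Nat.factorial k : ℝ) ≤ Real.exp 1 / Real.sqrt 2 * c := fact_ub k hk1
  have hbpos : 0 < b := by
    rw [hbdef]
    have : (0:ℝ) < 2 * h := by positivity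
    positivity
  have hcpos : 0 < c := by
    rw [hcdef]
    have : (0:ℝ) < 2 * k := by positivity
    positivity
  have hCpos : (0 : ℝ) < n.choose h := by
    exact_mod_cast Nat.choose_pos (by omega : h ≤ n)
  have hfact : (n.choose h : ℝ) * ((Nat.factorial h) * (Nat.factorial k)) = Nat.factorial n := by
    have := Nat.choose_mul_factorial_mul_factorial (by omega : h ≤ n)
    rw [← hkdef] at this
    rw [← this]
    push_cast
    ring_nf
  set P : ℝ := (Real.exp 1 / Real.sqrt 2 * b) * (Real.exp 1 / Real.sqrt 2 * c) with hPdef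
  have hPpos : 0 < P := by
    rw [hPdef]
    have h2 : (0:ℝ) < Real.sqrt 2 := Real.sqrt_pos.mpr (by norm_num)
    positivity
  have step1 : Real.sqrt Real.pi * a ≤ (n.choose h : ℝ) * P := by
    calc Real.sqrt Real.pi * a ≤ (Nat.factorial n : ℝ) := ha
      _ = (n.choose h : ℝ) * ((Nat.factorial h) * (Nat.factorial k)) := hfact.symm
      _ ≤ (n.choose h : ℝ) * P := by
          rw [hPdef]
          gcongr
  -- key inequality: E * P ≤ 3 * √h * (√π * a)
  have key : E * P ≤ 3 * Real.sqrt h * (Real.sqrt Real.pi * a) := by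
    have e2 : ((n : ℝ) / h) ^ h * ((h : ℝ) / Real.exp 1) ^ h = ((n : ℝ) / Real.exp 1) ^ h := by
      rw [← mul_pow]; congr 1; field_simp
    have e3 : ((n : ℝ) / k) ^ k * ((k : ℝ) / Real.exp 1) ^ k = ((n : ℝ) / Real.exp 1) ^ k := by
      rw [← mul_pow]; congr 1; field_simp
    have hEbc : E * (b * c)
        = Real.sqrt (2 * h) * Real.sqrt (2 * k) * ((n : ℝ) / Real.exp 1) ^ n := by
      have expand : E * (b * c) = (Real.sqrt (2 * h) * Real.sqrt (2 * k)) *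
          ((((n : ℝ) / h) ^ h * ((h : ℝ) / Real.exp 1) ^ h) *
           (((n : ℝ) / k) ^ k * ((k : ℝ) / Real.exp 1) ^ k)) := by
        rw [hEdef, hbdef, hcdef]; ring
      rw [expand, e2, e3, ← pow_add, hkn]
    have hEP : E * P = (Real.exp 1 / Real.sqrt 2) ^ 2 *
        (Real.sqrt (2 * h) * Real.sqrt (2 * k) * ((n : ℝ) / Real.exp 1) ^ n) := by
      rw [← hEbc, hPdef]; ring
    rw [hEP, hadef]
    have hpow : (0 : ℝ) ≤ ((n : ℝ) / Real.exp 1) ^ n := by positivity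
    have goal2 : (Real.exp 1 / Real.sqrt 2) ^ 2 * (Real.sqrt (2 * h) * Real.sqrt (2 * k))
        ≤ 3 * Real.sqrt h * (Real.sqrt Real.pi * Real.sqrt (2 * n)) := by
      have s2 : (0:ℝ) ≤ 2 := by norm_num
      have sh : Real.sqrt (2 * h) = Real.sqrt 2 * Real.sqrt h := Real.sqrt_mul s2 _
      have sk : Real.sqrt (2 * k) = Real.sqrt 2 * Real.sqrt k := Real.sqrt_mul s2 _
      have sn : Real.sqrt (2 * n) = Real.sqrt 2 * Real.sqrt n := Real.sqrt_mul s2 _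
      have s2pos : (0:ℝ) < Real.sqrt 2 := Real.sqrt_pos.mpr (by norm_num)
      have s2sq : Real.sqrt 2 * Real.sqrt 2 = 2 := Real.mul_self_sqrt s2
      have hdiv : (Real.exp 1 / Real.sqrt 2) ^ 2 = Real.exp 1 ^ 2 / 2 := by
        rw [div_pow]
        congr 1
        rw [sq, s2sq]
      rw [sh, sk, sn, hdiv]
      have hkey : Real.exp 1 ^ 2 * Real.sqrt k ≤ 3 * (Real.sqrt 2 * Real.sqrt Real.pi) *
          Real.sqrt n := by
        have h1 : Real.sqrt k ≤ Real.sqrt n := Real.sqrt_le_sqrt (by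
          exact_mod_cast Nat.cast_le.mpr (by omega : k ≤ n))
        have h2 := exp_sq_le
        have h3 : (0:ℝ) ≤ Real.sqrt k := Real.sqrt_nonneg _
        exact mul_le_mul h2 h1 h3 (by positivity)
      have hshn : (0:ℝ) ≤ Real.sqrt h := Real.sqrt_nonneg _
      calc Real.exp 1 ^ 2 / 2 * (Real.sqrt 2 * Real.sqrt h * (Real.sqrt 2 * Real.sqrt k))
          = Real.sqrt h * (Real.exp 1 ^ 2 * Real.sqrt k) := by
            rw [show Real.sqrt 2 * Real.sqrt h * (Real.sqrt 2 * Real.sqrt k)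
              = (Real.sqrt 2 * Real.sqrt 2) * (Real.sqrt h * Real.sqrt k) by ring, s2sq]
            ring
        _ ≤ Real.sqrt h * (3 * (Real.sqrt 2 * Real.sqrt Real.pi) * Real.sqrt n) := by
            exact mul_le_mul_of_nonneg_left hkey hshn
        _ = 3 * Real.sqrt h * (Real.sqrt Real.pi * (Real.sqrt 2 * Real.sqrt n)) := by ring
    calc (Real.exp 1 / Real.sqrt 2) ^ 2 *
          (Real.sqrt (2 * h) * Real.sqrt (2 * k) * ((n : ℝ) / Real.exp 1) ^ n)
        = ((Real.exp 1 / Real.sqrt 2) ^ 2 * (Real.sqrt (2 * h) * Real.sqrt (2 * k))) *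
          ((n : ℝ) / Real.exp 1) ^ n := by ring
      _ ≤ (3 * Real.sqrt h * (Real.sqrt Real.pi * Real.sqrt (2 * n))) *
          ((n : ℝ) / Real.exp 1) ^ n := mul_le_mul_of_nonneg_right goal2 hpow
      _ = 3 * Real.sqrt h * (Real.sqrt Real.pi * (Real.sqrt (2 * n) *
          ((n : ℝ) / Real.exp 1) ^ n)) := by ring
  -- combine
  have hEC : E ≤ 3 * Real.sqrt h * n.choose h := by
    have step2 : E * P ≤ (3 * Real.sqrt h * n.choose h) * P := by
      calc E * P ≤ 3 * Real.sqrt h * (Real.sqrt Real.pi * a) := key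
        _ ≤ 3 * Real.sqrt h * ((n.choose h : ℝ) * P) := by
            apply mul_le_mul_of_nonneg_left step1
            positivity
        _ = (3 * Real.sqrt h * n.choose h) * P := by ring
    exact le_of_mul_le_mul_right step2 hPpos
  exact le_trans hS hEC
end
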